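/- There exists t₀ < 0 such that the derivative of φ(t) = t·tanh(eᵗ) vanishes at t₀, and φ' is negative for t < t₀ and positive for t > t₀; in particular the zero of φ' is unique. -/

import Mathlib

noncomputable def telu : ℝ → ℝ := fun t => t * Real.tanh (Real.exp t)

/-! With `u = eᵗ`, `telu' t = u sech² u · (sinh (2u) / (2u) + t)`. Since `sinh` is convex on
`[0, ∞)` and vanishes at `0`, its chord slope `sinh x / x` is monotone there, so the second factor
is strictly increasing in `t`. It is negative at `t = -2` (where `2u ≤ 1` and `sinh 1 < 2`) and
positive at `t = 0`, so it has exactly one zero `t₀ ∈ (-2, 0)`, and `telu'` has the sign of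
`t - t₀`. -/

open Real Set

theorem convexOn_sinh_Ici : ConvexOn ℝ (Ici 0) sinh := by
  refine MonotoneOn.convexOn_of_deriv (convex_Ici 0) continuous_sinh.continuousOn
    differentiable_sinh.differentiableOn ?_
  rw [Real.deriv_sinh, interior_Ici]
  intro x hx y hy hxy
  rw [cosh_le_cosh, abs_of_pos hx, abs_of_pos (mem_Ioi.mp hy)]
  exact hxy

theorem monotoneOn_sinh_div_self : MonotoneOn (fun x => sinh x / x) (Ioi 0) := by
  intro x (hx : 0 < x) y (hy : 0 < y) hxy
  simpa using convexOn_sinh_Ici.secant_mono self_mem_Ici hx.le hy.le hx.ne' hy.ne' hxy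

noncomputable def teluDerivFactor (t : ℝ) : ℝ := sinh (2 * exp t) / (2 * exp t) + t

theorem hasDerivAt_telu (t : ℝ) :
    HasDerivAt telu (exp t / cosh (exp t) ^ 2 * teluDerivFactor t) t := by
  have hsinh := (hasDerivAt_sinh (exp t)).comp t (hasDerivAt_exp t)
  have hcosh := (hasDerivAt_cosh (exp t)).comp t (hasDerivAt_exp t)
  have htanh := hsinh.div hcosh (cosh_pos (exp t)).ne'
  have h := (hasDerivAt_id t).mul htanh
  have hfun : telu = id * ((sinh ∘ exp) / (cosh ∘ exp)) := by
    funext s; simp [telu, tanh_eq_sinh_div_cosh]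
  rw [hfun]
  refine h.congr_deriv ?_
  have hcs := cosh_sq_sub_sinh_sq (exp t)
  simp only [teluDerivFactor, sinh_two_mul, Function.comp_apply, id_eq, Pi.div_apply]
  field_simp
  linear_combination (t * exp t) * hcs

theorem continuous_teluDerivFactor : Continuous teluDerivFactor := by
  unfold teluDerivFactor
  fun_prop (disch := exact fun t => by positivity)

theorem teluDerivFactor_strictMono : StrictMono teluDerivFactor := by
  have hmono : Monotone fun t => sinh (2 * exp t) / (2 * exp t) := fun s t hst =>
    monotoneOn_sinh_div_self (by positivity : (0 : ℝ) < 2 * exp s)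
      (by positivity : (0 : ℝ) < 2 * exp t) (by gcongr)
  exact hmono.add_strictMono strictMono_id

theorem sinh_one_lt_two : sinh 1 < 2 := by
  rw [sinh_eq]
  linarith [exp_pos (-1), exp_one_lt_d9]

theorem teluDerivFactor_neg_two_neg : teluDerivFactor (-2) < 0 := by
  have hu : 2 * exp (-2) ≤ 1 := by
    rw [exp_neg, ← div_eq_mul_inv, div_le_one (exp_pos 2)]
    linarith [add_one_le_exp 2]
  have hslope : sinh (2 * exp (-2)) / (2 * exp (-2)) ≤ sinh 1 / 1 :=
    monotoneOn_sinh_div_self (by positivity : (0 : ℝ) < 2 * exp (-2)) (mem_Ioi.mpr one_pos) hu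
  rw [div_one] at hslope
  rw [teluDerivFactor]
  linarith [sinh_one_lt_two]

theorem teluDerivFactor_zero_pos : 0 < teluDerivFactor 0 := by
  simp only [teluDerivFactor, exp_zero, mul_one, add_zero]
  exact div_pos (sinh_pos_iff.mpr two_pos) two_pos

theorem telu_unique_critical_point :
    ∃ t₀ : ℝ, t₀ < 0 ∧ deriv telu t₀ = 0 ∧
      (∀ t : ℝ, t < t₀ → deriv telu t < 0) ∧
      (∀ t : ℝ, t₀ < t → 0 < deriv telu t) := by
  obtain ⟨t₀, ⟨-, ht₀_neg⟩, ht₀⟩ := intermediate_value_Ioo (by norm_num : (-2 : ℝ) ≤ 0)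
    continuous_teluDerivFactor.continuousOn ⟨teluDerivFactor_neg_two_neg, teluDerivFactor_zero_pos⟩
  have hderiv t : deriv telu t = exp t / cosh (exp t) ^ 2 * teluDerivFactor t :=
    (hasDerivAt_telu t).deriv
  have hscale t : 0 < exp t / cosh (exp t) ^ 2 := by positivity
  refine ⟨t₀, ht₀_neg, by rw [hderiv, ht₀, mul_zero], fun t ht => ?_, fun t ht => ?_⟩
  · rw [hderiv]
    exact mul_neg_of_pos_of_neg (hscale t) (ht₀ ▸ teluDerivFactor_strictMono ht)
  · rw [hderiv]
    exact mul_pos (hscale t) (ht₀ ▸ teluDerivFactor_strictMono ht)
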